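/- The set X₁ = { Σ_{n=1}^∞ δₙ αⁿ : (δₙ) ∈ W_θ, first nonzero digit of (δₙ) equals 1 } satisfies the set equation X₁ = ψ₁(X₁) ∪ ψ₂(X₁), where ψ₁(z) = αz and ψ₂(z) = α e^{iθ} z + α. -/

import Mathlib

/-!
Split a sequence of `X₁` into its first digit `d` and its tail `δ`: the value becomes
`α * (d + value δ)`, and the revolving condition for the whole sequence says exactly that `δ` is
revolving and, when `d ≠ 0`, that the first nonzero digit of `δ` is `e^{iθ} d`. The case `d = 0`
gives `ψ₁`; in the case `d = 1` the tail starts with `e^{iθ}`, and rotating it by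
`e^{(p-1)iθ} = e^{-iθ}` (which keeps the digits in `Δ_θ` since `e^{piθ} = 1`) yields a sequence
of `X₁`, giving `ψ₂`.
-/

open Complex

/-- e^{iθ} -/
noncomputable def rot (θ : ℝ) : ℂ := Complex.exp (θ * Complex.I)

/-- The digit set Δ_θ = {0, 1, e^{iθ}, …, e^{(p-1)iθ}}. -/
def Delta (θ : ℝ) (p : ℕ) : Set ℂ := insert 0 {z | ∃ k, k < p ∧ z = rot θ ^ k}

/-- Generalized Revolving Condition: each nonzero digit is e^{iθ} times the previous
nonzero digit. Sequences are indexed from 1; index 0 is a dummy (digit 0). -/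
def GRC (θ : ℝ) (δ : ℕ → ℂ) : Prop :=
  ∀ j k : ℕ, j < k → δ j ≠ 0 → δ k ≠ 0 → (∀ m, j < m → m < k → δ m = 0) →
    δ k = rot θ * δ j

/-- Membership in W_θ (with the convention δ 0 = 0, i.e. sequences start at index 1). -/
def Wrev (θ : ℝ) (p : ℕ) (δ : ℕ → ℂ) : Prop :=
  δ 0 = 0 ∧ (∀ n, δ n ∈ Delta θ p) ∧ GRC θ δ

/-- The first nonzero digit of δ is c (or δ is identically zero). -/
def FirstNonzero (δ : ℕ → ℂ) (c : ℂ) : Prop :=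
  (∀ n, δ n = 0) ∨ ∃ j, δ j = c ∧ ∀ m, m < j → δ m = 0

/-- X_c : points from revolving sequences whose first nonzero digit is c. -/
noncomputable def Xc (α : ℂ) (θ : ℝ) (p : ℕ) (c : ℂ) : Set ℂ :=
  {x | ∃ δ : ℕ → ℂ, Wrev θ p δ ∧ FirstNonzero δ c ∧ x = ∑' n, δ n * α ^ n}

/-- X_{α,θ} : points from all revolving sequences. -/
noncomputable def Xfull (α : ℂ) (θ : ℝ) (p : ℕ) : Set ℂ :=
  {x | ∃ δ : ℕ → ℂ, Wrev θ p δ ∧ x = ∑' n, δ n * α ^ n}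

lemma rot_ne_zero (θ : ℝ) : rot θ ≠ 0 := Complex.exp_ne_zero _

lemma norm_rot (θ : ℝ) : ‖rot θ‖ = 1 := by
  simp [rot, Complex.norm_exp_ofReal_mul_I]

lemma rot_pow_eq_one {θ : ℝ} {p : ℕ} {q : ℤ} (hp : 0 < p)
    (hθ : θ = 2 * Real.pi * (q : ℝ) / (p : ℝ)) : rot θ ^ p = 1 := by
  rw [rot, ← Complex.exp_nat_mul]
  have hp' : (p : ℂ) ≠ 0 := Nat.cast_ne_zero.2 hp.ne'
  have : (p : ℂ) * ((θ : ℂ) * Complex.I) = (q : ℂ) * (2 * (Real.pi : ℂ) * Complex.I) := by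
    rw [hθ]; push_cast; field_simp
  rw [this, Complex.exp_int_mul_two_pi_mul_I]

section Digits

variable {θ : ℝ} {p : ℕ}

lemma one_mem_Delta (hp : 0 < p) : (1 : ℂ) ∈ Delta θ p :=
  Or.inr ⟨0, hp, (pow_zero _).symm⟩

lemma rot_pow_mul_mem_Delta (h1 : rot θ ^ p = 1) (j : ℕ) {z : ℂ} (hz : z ∈ Delta θ p) :
    rot θ ^ j * z ∈ Delta θ p := by
  rcases hz with rfl | ⟨k, hk, rfl⟩
  · exact Or.inl (mul_zero _)
  · exact Or.inr ⟨(j + k) % p, Nat.mod_lt _ (by omega), by rw [← pow_add, pow_eq_pow_mod _ h1]⟩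

lemma norm_le_one_of_mem_Delta {z : ℂ} (hz : z ∈ Delta θ p) : ‖z‖ ≤ 1 := by
  rcases hz with rfl | ⟨k, _, rfl⟩
  · simp
  · rw [norm_pow, norm_rot, one_pow]

lemma summable_of_mem_Delta {α : ℂ} (hα : ‖α‖ < 1) {δ : ℕ → ℂ} (hδ : ∀ n, δ n ∈ Delta θ p) :
    Summable (fun n => δ n * α ^ n) := by
  refine Summable.of_norm_bounded (summable_geometric_of_lt_one (norm_nonneg α) hα) fun n => ?_
  rw [norm_mul, norm_pow]
  exact mul_le_of_le_one_left (by positivity) (norm_le_one_of_mem_Delta (hδ n))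

end Digits

section FirstNonzero

variable {δ : ℕ → ℂ} {c : ℂ}

lemma firstNonzero_iff (hc : c ≠ 0) :
    FirstNonzero δ c ↔ ∀ k, δ k ≠ 0 → (∀ m < k, δ m = 0) → δ k = c := by
  constructor
  · rintro (hz | ⟨j, hj, hlt⟩) k hk hlt'
    · exact absurd (hz k) hk
    · rcases lt_trichotomy j k with hjk | rfl | hkj
      · exact absurd (hj.symm.trans (hlt' j hjk)) hc
      · exact hj
      · exact absurd (hlt k hkj) hk
  · intro h
    by_cases hz : ∀ n, δ n = 0
    · exact Or.inl hz
    · rw [not_forall] at hz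
      have hmin : ∀ m < Nat.find hz, δ m = 0 := fun m hm => not_not.1 (Nat.find_min hz hm)
      exact Or.inr ⟨Nat.find hz, h _ (Nat.find_spec hz) hmin, hmin⟩

lemma FirstNonzero.smul (h : FirstNonzero δ c) (u : ℂ) : FirstNonzero (u • δ) (u * c) := by
  rcases h with hz | ⟨j, hj, hlt⟩
  · exact Or.inl fun n => by simp [hz n]
  · exact Or.inr ⟨j, by simp [hj], fun m hm => by simp [hlt m hm]⟩

end FirstNonzero

section Scaling

variable {θ : ℝ} {p : ℕ} {δ : ℕ → ℂ}

lemma GRC.smul (h : GRC θ δ) {u : ℂ} (hu : u ≠ 0) : GRC θ (u • δ) := by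
  intro j k hjk hj hk hgap
  simp only [Pi.smul_apply, smul_eq_mul, ne_eq, mul_eq_zero, hu, false_or] at hj hk hgap ⊢
  rw [h j k hjk hj hk hgap]
  ring

lemma Wrev.rot_pow_smul (h : Wrev θ p δ) (h1 : rot θ ^ p = 1) (j : ℕ) :
    Wrev θ p (rot θ ^ j • δ) := by
  obtain ⟨h0, hmem, hgrc⟩ := h
  exact ⟨by simp [h0], fun n => rot_pow_mul_mem_Delta h1 j (hmem n),
    hgrc.smul (pow_ne_zero _ (rot_ne_zero θ))⟩

end Scaling

/-- Keeping `δ 0` at the dummy position 0 (rather than `0`) lets `wrev_prepend_iff` go without a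
side condition on `δ 0`. -/
def prepend (d : ℂ) (δ : ℕ → ℂ) : ℕ → ℂ
  | 0 => δ 0
  | 1 => d
  | n + 2 => δ (n + 1)

section Prepend

variable {θ : ℝ} {p : ℕ} {d c : ℂ} {δ : ℕ → ℂ}

lemma prepend_add_one {m : ℕ} (hm : m ≠ 0) : prepend d δ (m + 1) = δ m := by
  obtain ⟨m, rfl⟩ := Nat.exists_eq_succ_of_ne_zero hm
  rfl

lemma exists_eq_prepend (δ : ℕ → ℂ) : ∃ d δ', δ = prepend d δ' :=
  ⟨δ 1, fun n => if n = 0 then δ 0 else δ (n + 1), by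
    funext n; rcases n with _ | _ | n <;> simp [prepend]⟩

lemma hasSum_prepend {α s : ℂ} (hδ0 : δ 0 = 0) (hs : HasSum (fun n => δ n * α ^ n) s) :
    HasSum (fun n => prepend d δ n * α ^ n) (α * (d + s)) := by
  have htail : HasSum (fun n => δ (n + 1) * α ^ (n + 1)) s := by
    simpa [hδ0] using (hasSum_nat_add_iff' 1).2 hs
  have hterms : (fun n => prepend d δ (n + 2) * α ^ (n + 2)) =
      fun n => α * (δ (n + 1) * α ^ (n + 1)) := by
    funext n; simp only [prepend]; ring
  have hval : α * (d + s) - ∑ i ∈ Finset.range 2, prepend d δ i * α ^ i = α * s := by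
    simp [Finset.sum_range_succ, prepend, hδ0]; ring
  refine (hasSum_nat_add_iff' 2).1 ?_
  rw [hterms, hval]
  exact htail.mul_left α

lemma firstNonzero_prepend_zero_iff (hδ0 : δ 0 = 0) (hc : c ≠ 0) :
    FirstNonzero (prepend 0 δ) c ↔ FirstNonzero δ c := by
  constructor
  · rintro (hz | ⟨_ | _ | j, hj, hlt⟩)
    · exact Or.inl fun n => by rcases n with _ | n; exacts [hδ0, hz (n + 2)]
    · exact absurd (hδ0.symm.trans hj).symm hc
    · exact absurd hj.symm hc
    · refine Or.inr ⟨j + 1, hj, fun m hm => ?_⟩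
      rcases m with _ | m
      exacts [hδ0, hlt (m + 2) (by omega)]
  · rintro (hz | ⟨_ | j, hj, hlt⟩)
    · exact Or.inl fun n => by rcases n with _ | _ | n; exacts [hz 0, rfl, hz _]
    · exact absurd (hδ0.symm.trans hj).symm hc
    · refine Or.inr ⟨j + 2, hj, fun m hm => ?_⟩
      rcases m with _ | _ | m
      exacts [hδ0, rfl, hlt (m + 1) (by omega)]

lemma firstNonzero_prepend_iff_of_ne_zero (hδ0 : δ 0 = 0) (hd : d ≠ 0) (hc : c ≠ 0) :
    FirstNonzero (prepend d δ) c ↔ d = c := by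
  constructor
  · rintro (hz | ⟨_ | _ | j, hj, hlt⟩)
    · exact absurd (hz 1) hd
    · exact absurd (hδ0.symm.trans hj).symm hc
    · exact hj
    · exact absurd (hlt 1 (by omega)) hd
  · rintro rfl
    exact Or.inr ⟨1, rfl, fun m hm => by rw [Nat.lt_one_iff.1 hm]; exact hδ0⟩

lemma grc_prepend_iff (hδ0 : δ 0 = 0) :
    GRC θ (prepend d δ) ↔ GRC θ δ ∧ (d ≠ 0 → FirstNonzero δ (rot θ * d)) := by
  have gap_shift : ∀ {j k : ℕ}, (∀ m, j < m → m < k → m ≠ 0 → δ m = 0) →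
      ∀ m, j + 1 < m → m < k + 1 → prepend d δ m = 0 := by
    intro j k h m hm1 hm2
    obtain ⟨m, rfl⟩ : ∃ m', m = m' + 1 := ⟨m - 1, by omega⟩
    rw [prepend_add_one (by omega)]
    exact h m (by omega) (by omega) (by omega)
  constructor
  · intro h
    refine ⟨fun j k hjk hj hk hgap => ?_, fun hd => ?_⟩
    · have hj0 : j ≠ 0 := by rintro rfl; exact hj hδ0
      have hk0 : k ≠ 0 := by omega
      have := h (j + 1) (k + 1) (by omega) (by rwa [prepend_add_one hj0])
        (by rwa [prepend_add_one hk0]) (gap_shift fun m hm1 hm2 _ => hgap m hm1 hm2)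
      rwa [prepend_add_one hj0, prepend_add_one hk0] at this
    · rw [firstNonzero_iff (mul_ne_zero (rot_ne_zero θ) hd)]
      intro k hk hlt
      have hk0 : k ≠ 0 := by rintro rfl; exact hk hδ0
      have := h 1 (k + 1) (by omega) hd (by rwa [prepend_add_one hk0])
        (gap_shift fun m _ hm2 _ => hlt m hm2)
      rwa [prepend_add_one hk0] at this
  · rintro ⟨h, hfirst⟩ j k hjk hj hk hgap
    obtain ⟨k, rfl⟩ : ∃ k', k = k' + 1 := ⟨k - 1, by omega⟩
    have hk0 : k ≠ 0 := by rintro rfl; exact hj (by rw [show j = 0 by omega]; exact hδ0)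
    rw [prepend_add_one hk0] at hk ⊢
    rcases j with _ | _ | j
    · exact absurd hδ0 hj
    · refine (firstNonzero_iff (mul_ne_zero (rot_ne_zero θ) hj)).1 (hfirst hj) k hk fun m hm => ?_
      rcases m with _ | m
      exacts [hδ0, hgap (m + 2) (by omega) (by omega)]
    · refine h (j + 1) k (by omega) hj hk fun m hm1 hm2 => ?_
      have := hgap (m + 1) (by omega) (by omega)
      rwa [prepend_add_one (by omega)] at this

lemma wrev_prepend_iff :
    Wrev θ p (prepend d δ) ↔
      d ∈ Delta θ p ∧ Wrev θ p δ ∧ (d ≠ 0 → FirstNonzero δ (rot θ * d)) := by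
  constructor
  · rintro ⟨h0 : δ 0 = 0, hmem, hgrc⟩
    obtain ⟨hgrc, hfirst⟩ := (grc_prepend_iff h0).1 hgrc
    refine ⟨hmem 1, ⟨h0, fun n => ?_, hgrc⟩, hfirst⟩
    rcases n with _ | n
    exacts [hmem 0, hmem (n + 2)]
  · rintro ⟨hd, ⟨h0, hmem, hgrc⟩, hfirst⟩
    refine ⟨h0, fun n => ?_, (grc_prepend_iff h0).2 ⟨hgrc, hfirst⟩⟩
    rcases n with _ | _ | n
    exacts [hmem 0, hd, hmem _]

end Prepend

section SetEquation

variable {α : ℂ} {θ : ℝ} {p : ℕ}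

lemma tsum_smul_mul_pow (u : ℂ) (δ : ℕ → ℂ) :
    ∑' n, (u • δ) n * α ^ n = u * ∑' n, δ n * α ^ n := by
  simp only [Pi.smul_apply, smul_eq_mul, mul_assoc, tsum_mul_left]

lemma mul_mem_Xc (hα : ‖α‖ < 1) {c y : ℂ} (hc : c ≠ 0) (hy : y ∈ Xc α θ p c) :
    α * y ∈ Xc α θ p c := by
  obtain ⟨δ, hW, hF, rfl⟩ := hy
  refine ⟨prepend 0 δ, wrev_prepend_iff.2 ⟨Or.inl rfl, hW, fun h => absurd rfl h⟩,
    (firstNonzero_prepend_zero_iff hW.1 hc).2 hF, ?_⟩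
  rw [(hasSum_prepend hW.1 (summable_of_mem_Delta hα hW.2.1).hasSum).tsum_eq, zero_add]

lemma mul_rot_mul_add_mem_Xc_one (hp : 0 < p) (h1 : rot θ ^ p = 1) (hα : ‖α‖ < 1) {y : ℂ}
    (hy : y ∈ Xc α θ p 1) : α * rot θ * y + α ∈ Xc α θ p 1 := by
  obtain ⟨δ, hW, hF, rfl⟩ := hy
  have hW' : Wrev θ p (rot θ • δ) := by simpa using hW.rot_pow_smul h1 1
  refine ⟨prepend 1 (rot θ • δ),
    wrev_prepend_iff.2 ⟨one_mem_Delta hp, hW', fun _ => by simpa using hF.smul (rot θ)⟩,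
    (firstNonzero_prepend_iff_of_ne_zero hW'.1 one_ne_zero one_ne_zero).2 rfl, ?_⟩
  rw [(hasSum_prepend hW'.1 (summable_of_mem_Delta hα hW'.2.1).hasSum).tsum_eq,
    tsum_smul_mul_pow]
  ring

lemma mem_image_of_mem_Xc_one (hp : 0 < p) (h1 : rot θ ^ p = 1) (hα : ‖α‖ < 1) {x : ℂ}
    (hx : x ∈ Xc α θ p 1) :
    x ∈ (fun z => α * z) '' Xc α θ p 1 ∪ (fun z => α * rot θ * z + α) '' Xc α θ p 1 := by
  obtain ⟨δ, hW, hF, rfl⟩ := hx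
  obtain ⟨d, ε, rfl⟩ := exists_eq_prepend δ
  obtain ⟨-, hWε, hFε⟩ := wrev_prepend_iff.1 hW
  rw [(hasSum_prepend hWε.1 (summable_of_mem_Delta hα hWε.2.1).hasSum).tsum_eq]
  rcases eq_or_ne d 0 with rfl | hd0
  · exact Or.inl ⟨_, ⟨ε, hWε, (firstNonzero_prepend_zero_iff hWε.1 one_ne_zero).1 hF, rfl⟩,
      by ring⟩
  · obtain rfl : d = 1 := (firstNonzero_prepend_iff_of_ne_zero hWε.1 hd0 one_ne_zero).1 hF
    have hinv : rot θ ^ (p - 1) * rot θ = 1 := by rw [← pow_succ, Nat.sub_add_cancel hp, h1]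
    refine Or.inr ⟨_, ⟨rot θ ^ (p - 1) • ε, hWε.rot_pow_smul h1 (p - 1),
      by simpa [hinv] using (hFε one_ne_zero).smul (rot θ ^ (p - 1)), rfl⟩, ?_⟩
    rw [tsum_smul_mul_pow]
    linear_combination (α * ∑' n, ε n * α ^ n) * hinv

end SetEquation

theorem X1_set_equation_general (α : ℂ) (θ : ℝ) (p : ℕ) (q : ℤ) (hp : 0 < p)
    (hθ : θ = 2 * Real.pi * (q : ℝ) / (p : ℝ)) (hα : ‖α‖ < 1) :
    Xc α θ p 1 =
      (fun z => α * z) '' Xc α θ p 1 ∪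
      (fun z => α * rot θ * z + α) '' Xc α θ p 1 := by
  have h1 : rot θ ^ p = 1 := rot_pow_eq_one hp hθ
  refine Set.Subset.antisymm (fun x hx => mem_image_of_mem_Xc_one hp h1 hα hx) ?_
  rintro _ (⟨y, hy, rfl⟩ | ⟨y, hy, rfl⟩)
  exacts [mul_mem_Xc hα one_ne_zero hy, mul_rot_mul_add_mem_Xc_one hp h1 hα hy]

/-- X₁ = ψ₁(X₁) ∪ ψ₂(X₁) with ψ₁(z) = αz, ψ₂(z) = α e^{iθ} z + α. -/
theorem X1_set_equation (α : ℂ) (θ : ℝ) (p : ℕ) (q : ℤ) (hp : 0 < p)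
    (hθ : θ = 2 * Real.pi * (q : ℝ) / (p : ℝ)) (hα0 : 0 < ‖α‖) (hα : ‖α‖ < 1) :
    Xc α θ p 1 =
      (fun z => α * z) '' Xc α θ p 1 ∪
      (fun z => α * rot θ * z + α) '' Xc α θ p 1 :=
  X1_set_equation_general α θ p q hp hθ hα
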